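/- arXiv:1802.00167 — 2 statements merged into one kernel-verified Lean document; each statement's English description precedes it below -/
import Mathlib

section
/- For every q ∈ (0,1), the quantity (1 - q/2)·ln((2-q)/(1-q)) - ln 2 is strictly positive. -/
theorem rate_function_one_pos (q : ℝ) (hq0 : 0 < q) (hq1 : q < 1) :
    0 < (1 - q / 2) * Real.log ((2 - q) / (1 - q)) - Real.log 2 := by
  have h1 : (0:ℝ) < 1 - q := by linarith
  have h2 : (0:ℝ) < 2 - q := by linarith
  set u : ℝ := (2 - q) / (2 * (1 - q)) with hu
  have hu0 : 0 < u := by positivity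
  have hu1 : 1 < u := by
    rw [hu, lt_div_iff₀ (by linarith)]; linarith
  have hlogu : q / (2 - q) < Real.log u := by
    have h := Real.log_lt_sub_one_of_pos (x := u⁻¹) (by positivity)
      (by intro h; rw [inv_eq_one] at h; linarith)
    rw [Real.log_inv] at h
    have heq : 1 - u⁻¹ = q / (2 - q) := by
      rw [hu, inv_div]; field_simp; ring
    linarith
  have hsplit : Real.log ((2 - q) / (1 - q)) = Real.log 2 + Real.log u := by
    have : (2 - q) / (1 - q) = 2 * u := by
      rw [hu]; field_simp
    rw [this, Real.log_mul (by norm_num) (by positivity)]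
  rw [hsplit]
  have hkey : (1 - q / 2) * (q / (2 - q)) = q / 2 := by
    field_simp
  have hpos : (0:ℝ) < 1 - q / 2 := by linarith
  have hmul := mul_lt_mul_of_pos_left hlogu hpos
  rw [hkey] at hmul
  nlinarith [Real.log_two_lt_d9]
end

section
/- Let W be an N×N real matrix with 1ᵀW = 1ᵀ, W1 = 1, and let J = (1/N)·1·1ᵀ. If σ denotes the largest singular value of W - J and σ < 1, then for any positive integer Q and any sequence of vectors γ^{(1)}, ..., γ^{(L)} in ℝ^N with each coordinate in [0,1], the statistic Γ^{(L)} = Σ_{l=1}^L W^{Q(L-l+1)} γ^{(l)} satisfies, for every coordinate index j, |N·e_jᵀΓ^{(L)} - Σ_{l=1}^L Σ_{i=1}^N γ_i^{(l)}| ≤ N^{3/2}·σ^Q/(1 - σ^Q). -/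
/-!
Since `W` fixes the all-ones vector on both sides, the averaging matrix `J` absorbs `W` from
either side and is idempotent, so `W ^ k - J = (W - J) ^ k` for `k ≥ 1`. The `l`-th summand of the
error is therefore `N` times a coordinate of `(W - J) ^ (Q (L - l + 1)) γ⁽ˡ⁾`, whose Euclidean norm
is at most `σ ^ (Q (L - l + 1)) √N`; summing the geometric series in `σ ^ Q` gives the bound.
-/

open Matrix Finset

theorem sub_pow_succ_of_mul_eq {R : Type*} [Ring R] {a e : R} (hae : a * e = e) (hea : e * a = e)
    (he : IsIdempotentElem e) (k : ℕ) : (a - e) ^ (k + 1) = a ^ (k + 1) - e := by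
  have hpow (m : ℕ) : a ^ m * e = e := by
    induction m with
    | zero => rw [pow_zero, one_mul]
    | succ m ih => rw [pow_succ', mul_assoc, ih, hae]
  induction k with
  | zero => simp
  | succ k ih =>
    rw [pow_succ, ih, sub_mul, mul_sub, mul_sub, hpow, hea, he.eq, ← pow_succ]
    abel

theorem sum_Icc_pow_sub_add_one_eq_sum_Ico (s : ℝ) (L : ℕ) :
    ∑ l ∈ Icc 1 L, s ^ (L - l + 1) = ∑ k ∈ Ico 1 (L + 1), s ^ k :=
  sum_nbij' (fun l => L - l + 1) (fun k => L - k + 1)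
    (fun l hl => by simp only [mem_Icc, mem_Ico] at hl ⊢; omega)
    (fun l hl => by simp only [mem_Icc, mem_Ico] at hl ⊢; omega)
    (fun l hl => by simp only [mem_Icc] at hl; omega)
    (fun l hl => by simp only [mem_Ico] at hl; omega)
    (fun _ _ => rfl)

section

variable {ι : Type*} [Fintype ι]

theorem abs_apply_le_sqrt_sum_sq (x : ι → ℝ) (j : ι) : |x j| ≤ √(∑ i, x i ^ 2) :=
  Real.abs_le_sqrt (single_le_sum (fun i _ => sq_nonneg (x i)) (mem_univ j))

theorem sqrt_sum_sq_le_sqrt_card {x : ι → ℝ} (hx : ∀ i, |x i| ≤ 1) :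
    √(∑ i, x i ^ 2) ≤ √(Fintype.card ι) := by
  refine Real.sqrt_le_sqrt ?_
  calc ∑ i, x i ^ 2 ≤ ∑ _i : ι, (1 : ℝ) :=
        sum_le_sum fun i _ => (sq_le_one_iff_abs_le_one (x i)).mpr (hx i)
    _ = Fintype.card ι := by simp

theorem pow_mulVec_le_of_mulVec_le [DecidableEq ι] {R : Type*} [Semiring R]
    (nrm : (ι → R) → ℝ) {A : Matrix ι ι R} {σ : ℝ} (hσ : 0 ≤ σ)
    (hA : ∀ x, nrm (A *ᵥ x) ≤ σ * nrm x) (k : ℕ) (x : ι → R) :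
    nrm (A ^ k *ᵥ x) ≤ σ ^ k * nrm x := by
  induction k with
  | zero => simp
  | succ k ih =>
    calc nrm (A ^ (k + 1) *ᵥ x) = nrm (A *ᵥ (A ^ k *ᵥ x)) := by rw [pow_succ', mulVec_mulVec]
      _ ≤ σ * (σ ^ k * nrm x) := (hA _).trans (mul_le_mul_of_nonneg_left ih hσ)
      _ = σ ^ (k + 1) * nrm x := by ring

theorem mul_of_const_eq_of_mulVec_one {R : Type*} [Semiring R] {W : Matrix ι ι R}
    (hW : W *ᵥ (fun _ => 1) = fun _ => 1) (c : R) :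
    W * of (fun _ _ => c) = of fun _ _ => c := by
  ext i k
  simpa [mul_apply, ← sum_mul, mulVec, dotProduct] using congrArg (· * c) (congrFun hW i)

theorem of_const_mul_eq_of_vecMul_one {R : Type*} [Semiring R] {W : Matrix ι ι R}
    (hW : (fun _ => 1) ᵥ* W = fun _ => 1) (c : R) :
    of (fun _ _ => c) * W = of fun _ _ => c := by
  ext i k
  simpa [mul_apply, ← mul_sum, vecMul, dotProduct] using congrArg (c * ·) (congrFun hW k)

variable (ι) in
noncomputable def averagingMatrix : Matrix ι ι ℝ := of fun _ _ => 1 / Fintype.card ι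

theorem averagingMatrix_mulVec_apply (x : ι → ℝ) (j : ι) :
    (averagingMatrix ι *ᵥ x) j = (∑ i, x i) / Fintype.card ι := by
  simp [averagingMatrix, mulVec, dotProduct, ← mul_sum, div_eq_inv_mul]

theorem isIdempotentElem_averagingMatrix : IsIdempotentElem (averagingMatrix ι) := by
  ext i k
  have : Nonempty ι := ⟨i⟩
  simp [averagingMatrix, mul_apply]

theorem abs_card_mul_pow_mulVec_sub_sum_le [DecidableEq ι] {W : Matrix ι ι ℝ}
    (hrow : (fun _ => 1) ᵥ* W = fun _ => 1) (hcol : W *ᵥ (fun _ => 1) = fun _ => 1)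
    {σ : ℝ} (hσ : 0 ≤ σ)
    (hop : ∀ x : ι → ℝ,
      √(∑ i, ((W - averagingMatrix ι) *ᵥ x) i ^ 2) ≤ σ * √(∑ i, x i ^ 2))
    {k : ℕ} (hk : 0 < k) {x : ι → ℝ} (hx : ∀ i, |x i| ≤ 1) (j : ι) :
    |Fintype.card ι * (W ^ k *ᵥ x) j - ∑ i, x i|
      ≤ (Fintype.card ι : ℝ) ^ ((3 : ℝ) / 2) * σ ^ k := by
  set n : ℝ := (Fintype.card ι : ℝ)
  have : Nonempty ι := ⟨j⟩
  have hn : 0 < n := Nat.cast_pos.mpr Fintype.card_pos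
  have hdev : n * (W ^ k *ᵥ x) j - ∑ i, x i = n * ((W - averagingMatrix ι) ^ k *ᵥ x) j := by
    obtain ⟨k, rfl⟩ := Nat.exists_eq_add_one_of_ne_zero hk.ne'
    have hWJ : W * averagingMatrix ι = averagingMatrix ι := mul_of_const_eq_of_mulVec_one hcol _
    have hJW : averagingMatrix ι * W = averagingMatrix ι := of_const_mul_eq_of_vecMul_one hrow _
    rw [sub_pow_succ_of_mul_eq hWJ hJW isIdempotentElem_averagingMatrix, sub_mulVec,
      Pi.sub_apply, averagingMatrix_mulVec_apply, mul_sub, mul_div_cancel₀ _ hn.ne']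
  have hrpow : n * √n = n ^ ((3 : ℝ) / 2) := by
    rw [Real.sqrt_eq_rpow, ← Real.rpow_one_add' hn.le (by norm_num)]
    norm_num
  calc |n * (W ^ k *ᵥ x) j - ∑ i, x i| = n * |((W - averagingMatrix ι) ^ k *ᵥ x) j| := by
        rw [hdev, abs_mul, abs_of_pos hn]
    _ ≤ n * (σ ^ k * √n) := by
        gcongr
        calc _ ≤ √(∑ i, ((W - averagingMatrix ι) ^ k *ᵥ x) i ^ 2) := abs_apply_le_sqrt_sum_sq _ j
          _ ≤ σ ^ k * √(∑ i, x i ^ 2) :=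
            pow_mulVec_le_of_mulVec_le (fun y => √(∑ i, y i ^ 2)) hσ hop k x
          _ ≤ σ ^ k * √n := mul_le_mul_of_nonneg_left (sqrt_sum_sq_le_sqrt_card hx) (by positivity)
    _ = n ^ ((3 : ℝ) / 2) * σ ^ k := by rw [← hrpow]; ring

end

theorem consensus_estimation_error_bound_general (N Q L : ℕ)
    (hQ : 0 < Q)
    (W : Matrix (Fin N) (Fin N) ℝ)
    (hrow : (fun _ => (1 : ℝ)) ᵥ* W = fun _ => (1 : ℝ))
    (hcol : W *ᵥ (fun _ => (1 : ℝ)) = fun _ => (1 : ℝ))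
    (J : Matrix (Fin N) (Fin N) ℝ)
    (hJ : J = Matrix.of fun _ _ => (1 : ℝ) / N)
    (σ : ℝ) (hσ0 : 0 < σ) (hσ1 : σ < 1)
    (hop : ∀ x : Fin N → ℝ,
      Real.sqrt (∑ i, ((W - J) *ᵥ x) i ^ 2) ≤ σ * Real.sqrt (∑ i, x i ^ 2))
    (γ : ℕ → Fin N → ℝ)
    (hγ : ∀ l, ∀ i, γ l i ∈ Set.Icc (0 : ℝ) 1)
    (Γ : Fin N → ℝ)
    (hΓ : Γ = ∑ l ∈ Finset.Icc 1 L, (W ^ (Q * (L - l + 1))) *ᵥ (γ l)) :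
    ∀ j : Fin N,
      |(N : ℝ) * Γ j - ∑ l ∈ Finset.Icc 1 L, ∑ i, γ l i|
        ≤ (N : ℝ) ^ ((3 : ℝ) / 2) * σ ^ Q / (1 - σ ^ Q) := by
  intro j
  rw [show J = averagingMatrix (Fin N) by rw [hJ, averagingMatrix, Fintype.card_fin]] at hop
  have hterm (l : ℕ) : |(N : ℝ) * (W ^ (Q * (L - l + 1)) *ᵥ γ l) j - ∑ i, γ l i|
      ≤ (N : ℝ) ^ ((3 : ℝ) / 2) * (σ ^ Q) ^ (L - l + 1) := by
    rw [← pow_mul]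
    simpa only [Fintype.card_fin] using abs_card_mul_pow_mulVec_sub_sum_le hrow hcol hσ0.le hop
      (Nat.mul_pos hQ (Nat.succ_pos _)) (fun i => (abs_of_nonneg (hγ l i).1).trans_le (hγ l i).2) j
  calc |(N : ℝ) * Γ j - ∑ l ∈ Icc 1 L, ∑ i, γ l i|
      = |∑ l ∈ Icc 1 L, ((N : ℝ) * (W ^ (Q * (L - l + 1)) *ᵥ γ l) j - ∑ i, γ l i)| := by
        rw [hΓ, Finset.sum_apply, mul_sum, sum_sub_distrib]
    _ ≤ ∑ l ∈ Icc 1 L, (N : ℝ) ^ ((3 : ℝ) / 2) * (σ ^ Q) ^ (L - l + 1) :=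
        (abs_sum_le_sum_abs _ _).trans (sum_le_sum fun l _ => hterm l)
    _ = (N : ℝ) ^ ((3 : ℝ) / 2) * ∑ k ∈ Ico 1 (L + 1), (σ ^ Q) ^ k := by
        rw [← mul_sum, sum_Icc_pow_sub_add_one_eq_sum_Ico]
    _ ≤ (N : ℝ) ^ ((3 : ℝ) / 2) * ((σ ^ Q) ^ 1 / (1 - σ ^ Q)) := by
        gcongr
        exact geom_sum_Ico_le_of_lt_one (by positivity) (pow_lt_one₀ hσ0.le hσ1 hQ.ne')
    _ = (N : ℝ) ^ ((3 : ℝ) / 2) * σ ^ Q / (1 - σ ^ Q) := by rw [pow_one, mul_div_assoc]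

theorem consensus_estimation_error_bound (N Q L : ℕ)
    (hN : 0 < N) (hQ : 0 < Q) (hL : 0 < L)
    (W : Matrix (Fin N) (Fin N) ℝ)
    (hrow : (fun _ => (1 : ℝ)) ᵥ* W = fun _ => (1 : ℝ))
    (hcol : W *ᵥ (fun _ => (1 : ℝ)) = fun _ => (1 : ℝ))
    (J : Matrix (Fin N) (Fin N) ℝ)
    (hJ : J = Matrix.of fun _ _ => (1 : ℝ) / N)
    (σ : ℝ) (hσ0 : 0 < σ) (hσ1 : σ < 1)
    (hop : ∀ x : Fin N → ℝ,
      Real.sqrt (∑ i, ((W - J) *ᵥ x) i ^ 2) ≤ σ * Real.sqrt (∑ i, x i ^ 2))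
    (γ : ℕ → Fin N → ℝ)
    (hγ : ∀ l, ∀ i, γ l i ∈ Set.Icc (0 : ℝ) 1)
    (Γ : Fin N → ℝ)
    (hΓ : Γ = ∑ l ∈ Finset.Icc 1 L, (W ^ (Q * (L - l + 1))) *ᵥ (γ l)) :
    ∀ j : Fin N,
      |(N : ℝ) * Γ j - ∑ l ∈ Finset.Icc 1 L, ∑ i, γ l i|
        ≤ (N : ℝ) ^ ((3 : ℝ) / 2) * σ ^ Q / (1 - σ ^ Q) :=
  consensus_estimation_error_bound_general N Q L hQ W hrow hcol J hJ σ hσ0 hσ1 hop γ hγ Γ hΓ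
end
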